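/- arXiv:1611.00712 — 4 statements merged into one kernel-verified Lean document; each statement's English description precedes it below -/
import Mathlib

section
/- (Gumbel-Max trick, n-ary case) Let α₁,…,αₙ > 0 and let G₁,…,Gₙ be i.i.d. standard Gumbel random variables. Then for each k, P(log αₖ + Gₖ > log αᵢ + Gᵢ for all i ≠ k) = αₖ / (α₁ + ⋯ + αₙ). -/
/-!
Write `F x = exp (-exp (-x))` for the Gumbel distribution function. A shift acts on `F` by
a power, `F (x + c) = F x ^ exp (-c)`, so given `Gₖ = x` all the other variables stay
below `x + log αₖ - log αᵢ` with probability `∏_{i ≠ k} F x ^ (αᵢ / αₖ) = F x ^ s`, where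
`s = ∑_{i ≠ k} αᵢ / αₖ`. Since `F Gₖ` is uniform on `(0, 1)` (the Gumbel law is the image
of the uniform law under the inverse of `F`), averaging gives
`∫₀¹ u ^ s du = 1 / (1 + s) = αₖ / ∑ᵢ αᵢ`.
-/

open MeasureTheory Real ProbabilityTheory Set

noncomputable def gumbelCDF (x : ℝ) : ℝ := exp (-exp (-x))

noncomputable def gumbelQuantile (u : ℝ) : ℝ := -log (-log u)

noncomputable def gumbelMeasure : Measure ℝ :=
  (volume.restrict (Ioo 0 1)).map gumbelQuantile

lemma gumbelCDF_mem_Ioo (x : ℝ) : gumbelCDF x ∈ Ioo 0 1 :=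
  ⟨exp_pos _, Real.exp_lt_one_iff.2 (neg_neg_of_pos (exp_pos _))⟩

lemma gumbelQuantile_gumbelCDF (x : ℝ) : gumbelQuantile (gumbelCDF x) = x := by
  simp [gumbelQuantile, gumbelCDF]

lemma gumbelCDF_gumbelQuantile {u : ℝ} (hu : u ∈ Ioo 0 1) :
    gumbelCDF (gumbelQuantile u) = u := by
  rw [gumbelCDF, gumbelQuantile, neg_neg, exp_log (neg_pos.2 (log_neg hu.1 hu.2)), neg_neg,
    exp_log hu.1]

lemma strictMonoOn_gumbelQuantile : StrictMonoOn gumbelQuantile (Ioo 0 1) := by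
  intro u hu v hv huv
  have hv' : 0 < -log v := neg_pos.2 (log_neg hv.1 hv.2)
  exact neg_lt_neg (log_lt_log hv' (neg_lt_neg (log_lt_log hu.1 huv)))

lemma measurable_gumbelQuantile : Measurable gumbelQuantile := by
  unfold gumbelQuantile; fun_prop

lemma gumbelCDF_add (x c : ℝ) : gumbelCDF (x + c) = gumbelCDF x ^ exp (-c) := by
  rw [gumbelCDF, gumbelCDF, rpow_def_of_pos (exp_pos _), log_exp, neg_add, exp_add]
  ring_nf

instance : IsProbabilityMeasure gumbelMeasure :=
  have : IsProbabilityMeasure (volume.restrict (Ioo (0 : ℝ) 1)) := ⟨by simp⟩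
  Measure.isProbabilityMeasure_map measurable_gumbelQuantile.aemeasurable

lemma gumbelQuantile_le_iff {u : ℝ} (hu : u ∈ Ioo 0 1) (x : ℝ) :
    gumbelQuantile u ≤ x ↔ u ≤ gumbelCDF x := by
  conv_lhs => rw [← gumbelQuantile_gumbelCDF x]
  exact strictMonoOn_gumbelQuantile.le_iff_le hu (gumbelCDF_mem_Ioo x)

lemma gumbelQuantile_lt_iff {u : ℝ} (hu : u ∈ Ioo 0 1) (x : ℝ) :
    gumbelQuantile u < x ↔ u < gumbelCDF x := by
  conv_lhs => rw [← gumbelQuantile_gumbelCDF x]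
  exact strictMonoOn_gumbelQuantile.lt_iff_lt hu (gumbelCDF_mem_Ioo x)

lemma gumbelMeasure_Iic (x : ℝ) : gumbelMeasure (Iic x) = ENNReal.ofReal (gumbelCDF x) := by
  have : gumbelQuantile ⁻¹' Iic x ∩ Ioo 0 1 = Ioc 0 (gumbelCDF x) := by
    ext u
    constructor
    · rintro ⟨h, hu⟩
      exact ⟨hu.1, (gumbelQuantile_le_iff hu x).1 h⟩
    · rintro ⟨h0, h⟩
      have hu : u ∈ Ioo 0 1 := ⟨h0, h.trans_lt (gumbelCDF_mem_Ioo x).2⟩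
      exact ⟨(gumbelQuantile_le_iff hu x).2 h, hu⟩
  rw [gumbelMeasure, Measure.map_apply measurable_gumbelQuantile measurableSet_Iic,
    Measure.restrict_apply (measurable_gumbelQuantile measurableSet_Iic), this, Real.volume_Ioc,
    sub_zero]

lemma gumbelMeasure_Iio (x : ℝ) : gumbelMeasure (Iio x) = ENNReal.ofReal (gumbelCDF x) := by
  have : gumbelQuantile ⁻¹' Iio x ∩ Ioo 0 1 = Ioo 0 (gumbelCDF x) := by
    ext u
    constructor
    · rintro ⟨h, hu⟩
      exact ⟨hu.1, (gumbelQuantile_lt_iff hu x).1 h⟩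
    · rintro ⟨h0, h⟩
      have hu : u ∈ Ioo 0 1 := ⟨h0, h.trans (gumbelCDF_mem_Ioo x).2⟩
      exact ⟨(gumbelQuantile_lt_iff hu x).2 h, hu⟩
  rw [gumbelMeasure, Measure.map_apply measurable_gumbelQuantile measurableSet_Iio,
    Measure.restrict_apply (measurable_gumbelQuantile measurableSet_Iio), this, Real.volume_Ioo,
    sub_zero]

lemma lintegral_gumbelCDF_rpow {s : ℝ} (hs : -1 < s) :
    ∫⁻ x, ENNReal.ofReal (gumbelCDF x ^ s) ∂gumbelMeasure = ENNReal.ofReal (1 / (s + 1)) := by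
  have hmeas : Measurable fun x => ENNReal.ofReal (gumbelCDF x ^ s) := by
    unfold gumbelCDF; fun_prop
  rw [gumbelMeasure, lintegral_map hmeas measurable_gumbelQuantile,
    setLIntegral_congr_fun measurableSet_Ioo fun u hu => by rw [gumbelCDF_gumbelQuantile hu],
    ← ofReal_integral_eq_lintegral_ofReal, ← integral_Ioc_eq_integral_Ioo,
    ← intervalIntegral.integral_of_le zero_le_one, integral_rpow (Or.inl hs)]
  · simp [zero_rpow (by linarith : s + 1 ≠ 0)]
  · exact (intervalIntegral.intervalIntegrable_rpow' hs).1.mono_set Ioo_subset_Ioc_self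
  · filter_upwards [ae_restrict_mem measurableSet_Ioo] with u hu
    exact rpow_nonneg hu.1.le s

lemma pi_gumbelMeasure_univ_pi_Iio {ι : Type*} [Fintype ι] (x : ι → ℝ) :
    Measure.pi (fun _ : ι => gumbelMeasure) (univ.pi fun i => Iio (x i))
      = ENNReal.ofReal (∏ i, gumbelCDF (x i)) := by
  rw [Measure.pi_pi, ENNReal.ofReal_prod_of_nonneg fun i _ => (gumbelCDF_mem_Ioo _).1.le]
  simp_rw [gumbelMeasure_Iio]

lemma prod_pi_gumbelMeasure_forall_lt_add {ι : Type*} [Fintype ι] (c : ι → ℝ) :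
    (gumbelMeasure.prod (Measure.pi fun _ : ι => gumbelMeasure)) {p | ∀ i, p.2 i < p.1 + c i}
      = ENNReal.ofReal (1 / (∑ i, exp (-c i) + 1)) := by
  have hmeas : MeasurableSet {p : ℝ × (ι → ℝ) | ∀ i, p.2 i < p.1 + c i} := by
    simp only [ofPred_forall]
    exact MeasurableSet.iInter fun i => measurableSet_lt (by fun_prop) (by fun_prop)
  have hsection (x : ℝ) : Prod.mk x ⁻¹' {p : ℝ × (ι → ℝ) | ∀ i, p.2 i < p.1 + c i}
      = univ.pi fun i => Iio (x + c i) := by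
    ext y; simp
  simp_rw [Measure.prod_apply hmeas, hsection, pi_gumbelMeasure_univ_pi_Iio, gumbelCDF_add,
    ← rpow_sum_of_pos (gumbelCDF_mem_Ioo _).1]
  exact lintegral_gumbelCDF_rpow (by linarith [show 0 ≤ ∑ i, exp (-c i) by positivity])

lemma pi_gumbelMeasure_argmax {n : ℕ} (α : Fin (n + 1) → ℝ) (hα : ∀ i, 0 < α i)
    (k : Fin (n + 1)) :
    Measure.pi (fun _ => gumbelMeasure) {x | ∀ i, i ≠ k → log (α i) + x i < log (α k) + x k}
      = ENNReal.ofReal (α k / ∑ i, α i) := by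
  have hset : {x : Fin (n + 1) → ℝ | ∀ i, i ≠ k → log (α i) + x i < log (α k) + x k}
      = MeasurableEquiv.piFinSuccAbove (fun _ => ℝ) k ⁻¹'
        {p | ∀ j, p.2 j < p.1 + (log (α k) - log (α (k.succAbove j)))} := by
    ext x
    simp only [ne_eq, Fin.forall_iff_succAbove k, not_true_eq_false, IsEmpty.forall_iff,
      Fin.succAbove_ne, not_false_eq_true, forall_const, true_and, mem_ofPred_eq, mem_preimage,
      MeasurableEquiv.piFinSuccAbove_apply, Fin.insertNthEquiv, Equiv.symm_mk, Equiv.coe_fn_mk,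
      Fin.removeNth]
    exact forall_congr' fun j => by constructor <;> intro h <;> linarith
  have hsum : ∑ j, exp (-(log (α k) - log (α (k.succAbove j)))) = (∑ i, α i - α k) / α k := by
    rw [Fin.sum_univ_succAbove α k, add_sub_cancel_left, Finset.sum_div]
    simp_rw [neg_sub, exp_sub, exp_log (hα _)]
  rw [hset,
    (measurePreserving_piFinSuccAbove (fun _ => gumbelMeasure) k).measure_preimage_equiv,
    prod_pi_gumbelMeasure_forall_lt_add, hsum]
  have := (hα k).ne'
  congr 1
  field_simp
  ring

lemma map_eq_gumbelMeasure {Ω : Type*} [MeasurableSpace Ω] {P : Measure Ω}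
    [IsProbabilityMeasure P] {X : Ω → ℝ} (hX : Measurable X)
    (hcdf : ∀ x, P {ω | X ω ≤ x} = ENNReal.ofReal (gumbelCDF x)) :
    P.map X = gumbelMeasure := by
  have := Measure.isProbabilityMeasure_map (μ := P) hX.aemeasurable
  refine Measure.ext_of_Iic _ _ fun x => ?_
  rw [Measure.map_apply hX measurableSet_Iic, gumbelMeasure_Iic]
  exact hcdf x

theorem gumbel_max_nary
    {Ω : Type*} [MeasurableSpace Ω] (P : Measure Ω) [IsProbabilityMeasure P]
    (n : ℕ) (α : Fin n → ℝ) (hα : ∀ i, 0 < α i)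
    (G : Fin n → Ω → ℝ) (hG : ∀ i, Measurable (G i))
    (hIndep : iIndepFun G P)
    (hGumbel : ∀ i, ∀ g : ℝ,
      P {ω | G i ω ≤ g} = ENNReal.ofReal (Real.exp (-Real.exp (-g)))) :
    ∀ k : Fin n,
      P {ω | ∀ i, i ≠ k → Real.log (α i) + G i ω < Real.log (α k) + G k ω}
        = ENNReal.ofReal (α k / ∑ i, α i) := by
  intro k
  obtain ⟨m, rfl⟩ : ∃ m, n = m + 1 := Nat.exists_eq_add_one_of_ne_zero k.pos.ne'
  have hlaw : P.map (fun ω i => G i ω) = Measure.pi fun _ => gumbelMeasure := by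
    rw [(iIndepFun_iff_map_fun_eq_pi_map fun i => (hG i).aemeasurable).1 hIndep]
    simp_rw [map_eq_gumbelMeasure (hG _) (hGumbel _)]
  have hmeas : MeasurableSet
      {x : Fin (m + 1) → ℝ | ∀ i, i ≠ k → log (α i) + x i < log (α k) + x k} := by
    measurability
  rw [← pi_gumbelMeasure_argmax α hα k, ← hlaw,
    Measure.map_apply (measurable_pi_lambda _ hG) hmeas]
  rfl
end

section
/- (Convexity at low temperature) If λ ≤ 1/(n-1), then the Concrete density p_{α,λ}(x) = (n-1)! λ^{n-1} ∏ₖ (αₖ xₖ^{-λ-1} / ∑ᵢ αᵢ xᵢ^{-λ}) is log-convex as a function of x on the open simplex Δ^{n-1}, for every α ∈ (0,∞)ⁿ. -/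
/-!
Multiplying `T(x) = ∑ᵢ αᵢ xᵢ^(-λ)` by `∏ₖ xₖ^λ` gives `G(x) = ∑ᵢ αᵢ ∏_{k ≠ i} xₖ^λ`, a positive
combination of weighted geometric means of total weight `(n-1)λ ≤ 1`, hence concave. Then
`log p = const + (1 - (n-1)λ) ∑ₖ (-log xₖ) + n (-log G)`, a nonnegative combination of convex
functions on the whole positive orthant, since `-log` of a positive concave function is convex.
-/

open Real

section

variable {𝕜 E β ι : Type*} [Semiring 𝕜] [PartialOrder 𝕜] [AddCommMonoid E] [AddCommMonoid β]
  [PartialOrder β] [IsOrderedAddMonoid β] [SMul 𝕜 E] [Module 𝕜 β] {s : Set E}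

theorem ConvexOn.sum (hs : Convex 𝕜 s) (t : Finset ι) {f : ι → E → β}
    (hf : ∀ i ∈ t, ConvexOn 𝕜 s (f i)) : ConvexOn 𝕜 s fun x => ∑ i ∈ t, f i x := by
  simpa only [← Finset.sum_fn] using Finset.sum_induction f (ConvexOn 𝕜 s)
    (fun _ _ => ConvexOn.add) (convexOn_const (0 : β) hs) hf

theorem ConcaveOn.sum (hs : Convex 𝕜 s) (t : Finset ι) {f : ι → E → β}
    (hf : ∀ i ∈ t, ConcaveOn 𝕜 s (f i)) : ConcaveOn 𝕜 s fun x => ∑ i ∈ t, f i x := by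
  simpa only [← Finset.sum_fn] using Finset.sum_induction f (ConcaveOn 𝕜 s)
    (fun _ _ => ConcaveOn.add) (concaveOn_const (0 : β) hs) hf

end

theorem ConcaveOn.convexOn_neg_log {E : Type*} [AddCommMonoid E] [SMul ℝ E] {s : Set E}
    {g : E → ℝ} (hg : ConcaveOn ℝ s g) (hpos : ∀ x ∈ s, 0 < g x) :
    ConvexOn ℝ s fun x => -log (g x) := by
  refine ⟨hg.1, fun x hx y hy a b ha hb hab => ?_⟩
  have hlog := strictConcaveOn_log_Ioi.concaveOn.2 (hpos x hx) (hpos y hy) ha hb hab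
  have hmono := log_le_log (convex_Ioi (0 : ℝ) (hpos x hx) (hpos y hy) ha hb hab)
    (hg.2 hx hy ha hb hab)
  simp only [smul_eq_mul] at hlog hmono ⊢
  linarith

theorem Real.geom_mean_le_arith_mean_weighted_of_sum_le_one {ι : Type*} (s : Finset ι)
    {w u : ι → ℝ} (hw : ∀ k ∈ s, 0 ≤ w k) (hws : ∑ k ∈ s, w k ≤ 1) (hu : ∀ k ∈ s, 0 ≤ u k) :
    ∏ k ∈ s, u k ^ w k ≤ 1 - ∑ k ∈ s, w k + ∑ k ∈ s, w k * u k := by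
  have h := geom_mean_le_arith_mean_weighted s.insertNone
    (fun o => o.elim (1 - ∑ k ∈ s, w k) w) (fun o => o.elim 1 u)
    (by rintro (_ | k) hk <;> simp_all)
    (by simp [Finset.sum_insertNone])
    (by rintro (_ | k) hk <;> simp_all)
  simpa [Finset.prod_insertNone, Finset.sum_insertNone] using h

theorem Real.concaveOn_prod_rpow {ι : Type*} (s : Finset ι) {w : ι → ℝ}
    (hw : ∀ k ∈ s, 0 ≤ w k) (hws : ∑ k ∈ s, w k ≤ 1) :
    ConcaveOn ℝ (Set.univ.pi fun _ : ι => Set.Ioi 0) fun x => ∏ k ∈ s, x k ^ w k := by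
  refine ⟨convex_pi fun _ _ => convex_Ioi 0, fun x hx y hy a b ha hb hab => ?_⟩
  simp only [Set.mem_univ_pi, Set.mem_Ioi] at hx hy
  set z := a • x + b • y
  have hz : ∀ k, 0 < z k := fun k => convex_Ioi (0 : ℝ) (hx k) (hy k) ha hb hab
  have hfactor : ∀ u : ι → ℝ, (∀ k, 0 < u k) →
      ∏ k ∈ s, u k ^ w k = (∏ k ∈ s, z k ^ w k) * ∏ k ∈ s, (u k / z k) ^ w k := by
    intro u hu
    rw [← Finset.prod_mul_distrib]
    refine Finset.prod_congr rfl fun k _ => ?_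
    rw [← mul_rpow (hz k).le (div_nonneg (hu k).le (hz k).le), mul_div_cancel₀ _ (hz k).ne']
  -- AM-GM with the slack weight `1 - ∑ w` bounds the product by an affine function tight at `z`.
  have hamgm : ∀ u : ι → ℝ, (∀ k, 0 < u k) →
      ∏ k ∈ s, (u k / z k) ^ w k ≤ 1 - ∑ k ∈ s, w k + ∑ k ∈ s, w k * (u k / z k) :=
    fun u hu => geom_mean_le_arith_mean_weighted_of_sum_le_one s hw hws
      fun k _ => div_nonneg (hu k).le (hz k).le
  have hmean : a * ∑ k ∈ s, w k * (x k / z k) + b * ∑ k ∈ s, w k * (y k / z k)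
      = ∑ k ∈ s, w k := by
    rw [Finset.mul_sum, Finset.mul_sum, ← Finset.sum_add_distrib]
    refine Finset.sum_congr rfl fun k _ => ?_
    have hzk : z k = a * x k + b * y k := rfl
    field_simp [(hz k).ne']
    rw [hzk]
  calc a • ∏ k ∈ s, x k ^ w k + b • ∏ k ∈ s, y k ^ w k
      = (∏ k ∈ s, z k ^ w k) *
          (a * ∏ k ∈ s, (x k / z k) ^ w k + b * ∏ k ∈ s, (y k / z k) ^ w k) := by
        rw [hfactor x hx, hfactor y hy, smul_eq_mul, smul_eq_mul]; ring
    _ ≤ (∏ k ∈ s, z k ^ w k) *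
          (a * (1 - ∑ k ∈ s, w k + ∑ k ∈ s, w k * (x k / z k))
            + b * (1 - ∑ k ∈ s, w k + ∑ k ∈ s, w k * (y k / z k))) := by
        have := hamgm x hx; have := hamgm y hy
        gcongr
        exact Finset.prod_nonneg fun k _ => (rpow_pos_of_pos (hz k) _).le
    _ = ∏ k ∈ s, z k ^ w k := by
        rw [show a * (1 - ∑ k ∈ s, w k + ∑ k ∈ s, w k * (x k / z k))
            + b * (1 - ∑ k ∈ s, w k + ∑ k ∈ s, w k * (y k / z k)) = 1 by
          linear_combination (1 - ∑ k ∈ s, w k) * hab + hmean, mul_one]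

section ConcreteDensity

variable {ι : Type*} [Fintype ι] {α : ι → ℝ} {l : ℝ} {x : ι → ℝ}

theorem sum_mul_rpow_neg_mul_prod_rpow [DecidableEq ι] (hx : ∀ k, 0 < x k) :
    (∑ i, α i * x i ^ (-l)) * ∏ k, x k ^ l
      = ∑ i, α i * ∏ k ∈ Finset.univ.erase i, x k ^ l := by
  rw [Finset.sum_mul]
  refine Finset.sum_congr rfl fun i _ => ?_
  rw [← Finset.mul_prod_erase _ _ (Finset.mem_univ i), rpow_neg (hx i).le]
  field_simp [(rpow_pos_of_pos (hx i) l).ne']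

theorem log_prod_concrete_eq [DecidableEq ι] [Nonempty ι] (hα : ∀ i, 0 < α i)
    (hx : ∀ k, 0 < x k) :
    log (∏ k, α k * x k ^ (-l - 1) / ∑ i, α i * x i ^ (-l))
      = ∑ k, log (α k) + (1 - ((Fintype.card ι : ℝ) - 1) * l) * ∑ k, -log (x k)
        + Fintype.card ι * -log (∑ i, α i * ∏ k ∈ Finset.univ.erase i, x k ^ l) := by
  have hT : 0 < ∑ i, α i * x i ^ (-l) :=
    Finset.sum_pos (fun i _ => mul_pos (hα i) (rpow_pos_of_pos (hx i) _)) Finset.univ_nonempty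
  have hlogT : log (∑ i, α i * x i ^ (-l))
      = log (∑ i, α i * ∏ k ∈ Finset.univ.erase i, x k ^ l) - l * ∑ k, log (x k) := by
    rw [← sum_mul_rpow_neg_mul_prod_rpow hx, log_mul hT.ne'
      (Finset.prod_pos fun k _ => rpow_pos_of_pos (hx k) l).ne',
      log_prod fun k _ => (rpow_pos_of_pos (hx k) l).ne', Finset.mul_sum]
    simp only [log_rpow (hx _)]
    ring
  have hterm : ∀ k, log (α k * x k ^ (-l - 1) / ∑ i, α i * x i ^ (-l))
      = log (α k) + (-l - 1) * log (x k) - log (∑ i, α i * x i ^ (-l)) := fun k => by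
    rw [log_div (mul_pos (hα k) (rpow_pos_of_pos (hx k) _)).ne' hT.ne',
      log_mul (hα k).ne' (rpow_pos_of_pos (hx k) _).ne', log_rpow (hx k)]
  rw [log_prod fun k _ => (div_pos (mul_pos (hα k) (rpow_pos_of_pos (hx k) _)) hT).ne']
  simp only [hterm, Finset.sum_sub_distrib, Finset.sum_add_distrib, Finset.sum_const,
    Finset.card_univ, nsmul_eq_mul, ← Finset.mul_sum, Finset.sum_neg_distrib, hlogT]
  ring

theorem convexOn_log_prod_concrete [Nonempty ι] (hα : ∀ i, 0 < α i) (hl : 0 ≤ l)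
    (hln : ((Fintype.card ι : ℝ) - 1) * l ≤ 1) :
    ConvexOn ℝ (Set.univ.pi fun _ : ι => Set.Ioi 0)
      fun x => log (∏ k, α k * x k ^ (-l - 1) / ∑ i, α i * x i ^ (-l)) := by
  classical
  have hS : Convex ℝ (Set.univ.pi fun _ : ι => Set.Ioi (0 : ℝ)) :=
    convex_pi fun _ _ => convex_Ioi 0
  have hG : ConcaveOn ℝ (Set.univ.pi fun _ : ι => Set.Ioi 0)
      fun x => ∑ i, α i * ∏ k ∈ Finset.univ.erase i, x k ^ l :=
    ConcaveOn.sum hS _ fun i _ => (concaveOn_prod_rpow _ (fun _ _ => hl) (by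
      simpa [Finset.card_erase_of_mem, Nat.cast_sub Fintype.card_pos] using hln)).smul
        (hα i).le
  have hGpos : ∀ x ∈ Set.univ.pi (fun _ : ι => Set.Ioi (0 : ℝ)),
      0 < ∑ i, α i * ∏ k ∈ Finset.univ.erase i, x k ^ l := fun x hx =>
    Finset.sum_pos (fun i _ => mul_pos (hα i) (Finset.prod_pos fun k _ =>
      rpow_pos_of_pos (hx k (Set.mem_univ k)) _)) Finset.univ_nonempty
  have hL : ConvexOn ℝ (Set.univ.pi fun _ : ι => Set.Ioi 0) fun x => ∑ k, -log (x k) :=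
    ConvexOn.sum hS _ fun k _ => ((LinearMap.proj k).concaveOn hS).convexOn_neg_log
      fun x hx => hx k (Set.mem_univ k)
  refine (((convexOn_const (∑ k, log (α k)) hS).add (hL.smul (sub_nonneg.2 hln))).add
    ((hG.convexOn_neg_log hGpos).smul (Nat.cast_nonneg (Fintype.card ι)))).congr fun x hx => ?_
  exact (log_prod_concrete_eq hα fun k => hx k (Set.mem_univ k)).symm

end ConcreteDensity

theorem convex_openSimplex (ι : Type*) [Fintype ι] :
    Convex ℝ {x : ι → ℝ | (∀ k, x k ∈ Set.Ioo 0 1) ∧ ∑ k, x k = 1} := by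
  intro x hx y hy a b ha hb hab
  refine ⟨fun k => convex_Ioo (0 : ℝ) 1 (hx.1 k) (hy.1 k) ha hb hab, ?_⟩
  simp [Finset.sum_add_distrib, ← Finset.mul_sum, hx.2, hy.2, hab]

/-- At temperatures `λ ≤ 1/(n-1)` the Concrete density is log-convex on the open simplex. -/
theorem concrete_log_convex
    (n : ℕ) (hn : 2 ≤ n) (α : Fin n → ℝ) (hα : ∀ i, 0 < α i)
    (l : ℝ) (hl : 0 < l) (hln : l ≤ 1 / ((n : ℝ) - 1)) :
    ConvexOn ℝ {x : Fin n → ℝ | (∀ k, x k ∈ Set.Ioo (0 : ℝ) 1) ∧ ∑ k, x k = 1}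
      (fun x => Real.log
        (((n - 1).factorial : ℝ) * l ^ (n - 1) *
          ∏ k, (α k * x k ^ (-l - 1) / ∑ i, α i * x i ^ (-l)))) := by
  have : Nonempty (Fin n) := ⟨⟨0, by omega⟩⟩
  have hn' : (0 : ℝ) < n - 1 := by
    have : (2 : ℝ) ≤ n := by exact_mod_cast hn
    linarith
  have hln' : ((Fintype.card (Fin n) : ℝ) - 1) * l ≤ 1 := by
    simpa [mul_comm] using (le_div_iff₀ hn').1 hln
  have hc : 0 < ((n - 1).factorial : ℝ) * l ^ (n - 1) := by positivity
  refine (((convexOn_const (log (((n - 1).factorial : ℝ) * l ^ (n - 1)))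
    (convex_pi fun _ _ => convex_Ioi 0)).add (convexOn_log_prod_concrete hα hl.le hln')).subset
    (fun x hx => Set.mem_univ_pi.2 fun k => (hx.1 k).1) (convex_openSimplex _)).congr
    fun x hx => ?_
  have hT : 0 < ∑ i, α i * x i ^ (-l) := Finset.sum_pos
    (fun i _ => mul_pos (hα i) (rpow_pos_of_pos (hx.1 i).1 _)) Finset.univ_nonempty
  exact (log_mul hc.ne' (Finset.prod_pos fun k _ =>
    div_pos (mul_pos (hα k) (rpow_pos_of_pos (hx.1 k).1 _)) hT).ne').symm
end

section
/- (Binary Concrete reparameterization) Let α, λ > 0 and L a standard Logistic random variable. Then X = σ((log α + L)/λ), where σ(t) = 1/(1+exp(-t)), takes values in (0,1) and has density p(x) = λ α x^{-λ-1}(1-x)^{-λ-1} / (α x^{-λ} + (1-x)^{-λ})². -/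
open MeasureTheory Real Set

/-! For `t ∈ (0,1)`, monotonicity of the sigmoid turns `X ≤ t` into
`L ≤ λ log (t / (1 - t)) - log α`, so `P (X ≤ t) = F t` with `F t = t^λ / (t^λ + α (1 - t)^λ)`.
Written with the positive exponent `λ`, this `F` is continuous on `[0,1]` with `F 0 = 0`,
`F 1 = 1`, and its derivative on `(0,1)` is the stated density, so by the fundamental theorem of
calculus the density measure also gives `Iic t` mass `F t` and has total mass `1`. Two probability
measures carried by `(0,1)` that agree on every `Iic t` with `t ∈ (0,1)` are equal.
-/

theorem MeasureTheory.Measure.ext_of_Iic_of_ae_mem_Ioo {α : Type*} [TopologicalSpace α]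
    [MeasurableSpace α] [SecondCountableTopology α] [LinearOrder α] [OrderTopology α]
    [BorelSpace α] {μ ν : Measure α} [IsProbabilityMeasure μ] [IsProbabilityMeasure ν] {a b : α}
    (hμ : ∀ᵐ x ∂μ, x ∈ Ioo a b) (hν : ∀ᵐ x ∂ν, x ∈ Ioo a b)
    (h : ∀ t ∈ Ioo a b, μ (Iic t) = ν (Iic t)) : μ = ν := by
  refine Measure.ext_of_Iic μ ν fun t => ?_
  rcases le_or_gt t a with hta | hat
  · have hnull : ∀ ρ : Measure α, (∀ᵐ x ∂ρ, x ∈ Ioo a b) → ρ (Iic t) = 0 := fun ρ hρ =>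
      measure_eq_zero_iff_ae_notMem.2 <| hρ.mono fun x hx hxt => hx.1.not_ge (le_trans hxt hta)
    rw [hnull μ hμ, hnull ν hν]
  rcases lt_or_ge t b with htb | hbt
  · exact h t ⟨hat, htb⟩
  · have hfull : ∀ ρ : Measure α, [IsProbabilityMeasure ρ] → (∀ᵐ x ∂ρ, x ∈ Ioo a b) →
        ρ (Iic t) = 1 := fun ρ _ hρ =>
      (prob_compl_eq_zero_iff measurableSet_Iic).1 <| measure_eq_zero_iff_ae_notMem.2 <|
        hρ.mono fun x hx hxt => hxt (hx.2.le.trans hbt)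
    rw [hfull μ hμ, hfull ν hν]

theorem setLIntegral_Ioo_ofReal_eq_sub_of_hasDerivAt {f f' : ℝ → ℝ} {a b : ℝ} (hab : a ≤ b)
    (hcont : ContinuousOn f (Icc a b)) (hderiv : ∀ x ∈ Ioo a b, HasDerivAt f (f' x) x)
    (hpos : ∀ x ∈ Ioo a b, 0 ≤ f' x) :
    ∫⁻ x in Ioo a b, ENNReal.ofReal (f' x) = ENNReal.ofReal (f b - f a) := by
  have hint : IntegrableOn f' (Ioc a b) :=
    intervalIntegral.integrableOn_deriv_of_nonneg hcont hderiv hpos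
  rw [← ofReal_integral_eq_lintegral_ofReal (hint.mono_set Ioo_subset_Ioc_self)
      ((ae_restrict_iff' measurableSet_Ioo).2 (ae_of_all _ hpos)),
    ← integral_Ioc_eq_integral_Ioo, ← intervalIntegral.integral_of_le hab,
    intervalIntegral.integral_eq_sub_of_hasDerivAt_of_le hab hcont hderiv
      ((intervalIntegrable_iff_integrableOn_Ioc_of_le hab).2 hint)]

theorem Real.sigmoid_log {r : ℝ} (hr : 0 < r) : sigmoid (log r) = r / (1 + r) := by
  rw [sigmoid_def, exp_neg, exp_log hr]
  field_simp
  ring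

theorem Real.sigmoid_log_div_one_sub {t : ℝ} (ht : t ∈ Ioo 0 1) :
    sigmoid (log (t / (1 - t))) = t := by
  have h1t : 0 < 1 - t := sub_pos.2 ht.2
  rw [sigmoid_log (div_pos ht.1 h1t)]
  field_simp
  ring

theorem Real.sigmoid_add_div_le_iff {c l t y : ℝ} (hl : 0 < l) (ht : t ∈ Ioo 0 1) :
    sigmoid ((c + y) / l) ≤ t ↔ y ≤ l * log (t / (1 - t)) - c := by
  conv_lhs => rw [← sigmoid_log_div_one_sub ht]
  rw [sigmoid_le_iff, div_le_iff₀ hl]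
  constructor <;> intro h <;> linarith

noncomputable def binaryConcreteCDF (α l x : ℝ) : ℝ := x ^ l / (x ^ l + α * (1 - x) ^ l)

noncomputable def binaryConcretePDF (α l x : ℝ) : ℝ :=
  l * α * x ^ (-l - 1) * (1 - x) ^ (-l - 1) / (α * x ^ (-l) + (1 - x) ^ (-l)) ^ 2

section binaryConcrete

variable {α l : ℝ}

theorem sigmoid_eq_binaryConcreteCDF (hα : 0 < α) {t : ℝ} (ht : t ∈ Ioo 0 1) :
    sigmoid (l * log (t / (1 - t)) - log α) = binaryConcreteCDF α l t := by
  have h1t : 0 < 1 - t := sub_pos.2 ht.2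
  have hpow : 0 < (t / (1 - t)) ^ l := rpow_pos_of_pos (div_pos ht.1 h1t) l
  have htl : 0 < t ^ l := rpow_pos_of_pos ht.1 l
  have h1tl : 0 < (1 - t) ^ l := rpow_pos_of_pos h1t l
  rw [← log_rpow (div_pos ht.1 h1t), ← log_div hpow.ne' hα.ne', sigmoid_log (div_pos hpow hα),
    binaryConcreteCDF, div_rpow ht.1.le h1t.le]
  field_simp
  ring

theorem binaryConcreteCDF_zero (hl : l ≠ 0) : binaryConcreteCDF α l 0 = 0 := by
  simp [binaryConcreteCDF, zero_rpow hl]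

theorem binaryConcreteCDF_one (hl : l ≠ 0) : binaryConcreteCDF α l 1 = 1 := by
  simp [binaryConcreteCDF, zero_rpow hl]

theorem continuousOn_binaryConcreteCDF (hα : 0 < α) (hl : 0 < l) :
    ContinuousOn (binaryConcreteCDF α l) (Icc 0 1) := by
  have hpow : Continuous fun x : ℝ => x ^ l := continuous_id.rpow_const fun _ => Or.inr hl.le
  have hpow' : Continuous fun x : ℝ => (1 - x) ^ l :=
    (continuous_const.sub continuous_id).rpow_const fun _ => Or.inr hl.le
  refine hpow.continuousOn.div (hpow.add (hpow'.const_mul α)).continuousOn fun x hx => ?_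
  rcases hx.1.eq_or_lt with rfl | hx0
  · simp [zero_rpow hl.ne', hα.ne']
  · have := rpow_pos_of_pos hx0 l
    have := rpow_nonneg (sub_nonneg.2 hx.2) l
    positivity

theorem hasDerivAt_binaryConcreteCDF (hα : 0 < α) {x : ℝ} (hx : x ∈ Ioo 0 1) :
    HasDerivAt (binaryConcreteCDF α l) (binaryConcretePDF α l x) x := by
  have h1x : 0 < 1 - x := sub_pos.2 hx.2
  have hu : HasDerivAt (fun y : ℝ => y ^ l) (l * x ^ (l - 1)) x :=
    hasDerivAt_rpow_const (Or.inl hx.1.ne')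
  have hv : HasDerivAt (fun y : ℝ => (1 - y) ^ l) (-1 * l * (1 - x) ^ (l - 1)) x :=
    ((hasDerivAt_id x).const_sub 1).rpow_const (Or.inl h1x.ne')
  have hden : 0 < x ^ l + α * (1 - x) ^ l := by have := hx.1; positivity
  refine (hu.fun_div (hu.fun_add (hv.const_mul α)) hden.ne').congr_deriv ?_
  have hx0 : x ≠ 0 := hx.1.ne'
  have h1x0 : 1 - x ≠ 0 := h1x.ne'
  have hxl : 0 < x ^ l := rpow_pos_of_pos hx.1 l
  have h1xl : 0 < (1 - x) ^ l := rpow_pos_of_pos h1x l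
  rw [binaryConcretePDF, rpow_sub_one hx0, rpow_sub_one h1x0, rpow_sub_one hx0,
    rpow_sub_one h1x0, rpow_neg hx.1.le, rpow_neg h1x.le]
  field_simp
  ring

theorem binaryConcretePDF_nonneg (hα : 0 < α) (hl : 0 ≤ l) {x : ℝ} (hx : x ∈ Ioo 0 1) :
    0 ≤ binaryConcretePDF α l x := by
  have := hx.1
  have : 0 < 1 - x := sub_pos.2 hx.2
  unfold binaryConcretePDF
  positivity

end binaryConcrete

noncomputable def binaryConcreteMeasure (α l : ℝ) : Measure ℝ :=
  (volume.restrict (Ioo 0 1)).withDensity fun x => ENNReal.ofReal (binaryConcretePDF α l x)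

section binaryConcreteMeasure

variable {α l : ℝ}

theorem binaryConcreteMeasure_apply {s : Set ℝ} (hs : MeasurableSet s) :
    binaryConcreteMeasure α l s =
      ∫⁻ x in s ∩ Ioo 0 1, ENNReal.ofReal (binaryConcretePDF α l x) := by
  rw [binaryConcreteMeasure, withDensity_apply _ hs, Measure.restrict_restrict hs]

theorem lintegral_Ioo_binaryConcretePDF (hα : 0 < α) (hl : 0 < l) {t : ℝ} (ht : t ∈ Ioc 0 1) :
    ∫⁻ x in Ioo 0 t, ENNReal.ofReal (binaryConcretePDF α l x) =
      ENNReal.ofReal (binaryConcreteCDF α l t) := by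
  have hsub : Ioo 0 t ⊆ Ioo (0 : ℝ) 1 := Ioo_subset_Ioo_right ht.2
  rw [setLIntegral_Ioo_ofReal_eq_sub_of_hasDerivAt ht.1.le
      ((continuousOn_binaryConcreteCDF hα hl).mono (Icc_subset_Icc_right ht.2))
      (fun x hx => hasDerivAt_binaryConcreteCDF hα (hsub hx))
      (fun x hx => binaryConcretePDF_nonneg hα hl.le (hsub hx)),
    binaryConcreteCDF_zero hl.ne', sub_zero]

theorem binaryConcreteMeasure_Iic (hα : 0 < α) (hl : 0 < l) {t : ℝ} (ht : t ∈ Ioo 0 1) :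
    binaryConcreteMeasure α l (Iic t) = ENNReal.ofReal (binaryConcreteCDF α l t) := by
  have hIoc : Iic t ∩ Ioo 0 1 = Ioc 0 t := by
    ext x
    simp only [mem_inter_iff, mem_Iic, mem_Ioo, mem_Ioc]
    constructor
    · rintro ⟨hxt, hx0, -⟩
      exact ⟨hx0, hxt⟩
    · rintro ⟨hx0, hxt⟩
      exact ⟨hxt, hx0, hxt.trans_lt ht.2⟩
  rw [binaryConcreteMeasure_apply measurableSet_Iic, hIoc, ← setLIntegral_congr Ioo_ae_eq_Ioc,
    lintegral_Ioo_binaryConcretePDF hα hl ⟨ht.1, ht.2.le⟩]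

theorem isProbabilityMeasure_binaryConcreteMeasure (hα : 0 < α) (hl : 0 < l) :
    IsProbabilityMeasure (binaryConcreteMeasure α l) := by
  constructor
  rw [binaryConcreteMeasure_apply MeasurableSet.univ, univ_inter,
    lintegral_Ioo_binaryConcretePDF hα hl ⟨one_pos, le_rfl⟩, binaryConcreteCDF_one hl.ne',
    ENNReal.ofReal_one]

theorem ae_mem_Ioo_binaryConcreteMeasure : ∀ᵐ x ∂binaryConcreteMeasure α l, x ∈ Ioo 0 1 :=
  withDensity_absolutelyContinuous _ _ (ae_restrict_mem measurableSet_Ioo)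

end binaryConcreteMeasure

theorem measure_sigmoid_le_eq_binaryConcreteCDF {Ω : Type*} [MeasurableSpace Ω] (P : Measure Ω)
    {α l : ℝ} (hα : 0 < α) (hl : 0 < l) {L : Ω → ℝ}
    (hLogistic : ∀ s, P {ω | L ω ≤ s} = ENNReal.ofReal (sigmoid s)) {t : ℝ} (ht : t ∈ Ioo 0 1) :
    P {ω | sigmoid ((log α + L ω) / l) ≤ t} = ENNReal.ofReal (binaryConcreteCDF α l t) := by
  simp_rw [sigmoid_add_div_le_iff hl ht]
  rw [hLogistic, sigmoid_eq_binaryConcreteCDF hα ht]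

/-- Binary Concrete reparameterization: `σ((log α + L)/λ)` with `L` standard Logistic
takes values in `(0,1)` and has the Binary Concrete density. -/
theorem binary_concrete_reparameterization
    {Ω : Type*} [MeasurableSpace Ω] (P : Measure Ω) [IsProbabilityMeasure P]
    (α l : ℝ) (hα : 0 < α) (hl : 0 < l)
    (L : Ω → ℝ) (hL : Measurable L)
    (hLogistic : ∀ t : ℝ, P {ω | L ω ≤ t} = ENNReal.ofReal (1 / (1 + Real.exp (-t))))
    (X : Ω → ℝ)
    (hX : ∀ ω, X ω = 1 / (1 + Real.exp (-((Real.log α + L ω) / l)))) :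
    (∀ ω, X ω ∈ Set.Ioo (0 : ℝ) 1) ∧
    Measure.map X P
      = (volume.restrict (Set.Ioo (0 : ℝ) 1)).withDensity
          (fun x => ENNReal.ofReal
            (l * α * x ^ (-l - 1) * (1 - x) ^ (-l - 1) /
              (α * x ^ (-l) + (1 - x) ^ (-l)) ^ 2)) := by
  obtain rfl : X = fun ω => sigmoid ((log α + L ω) / l) :=
    funext fun ω => by rw [hX, one_div, sigmoid_def]
  have hLogistic' : ∀ s, P {ω | L ω ≤ s} = ENNReal.ofReal (sigmoid s) := fun s => by
    rw [hLogistic, one_div, sigmoid_def]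
  have hXm : Measurable fun ω => sigmoid ((log α + L ω) / l) :=
    continuous_sigmoid.measurable.comp ((hL.const_add _).div_const l)
  have hmem : ∀ ω, sigmoid ((log α + L ω) / l) ∈ Ioo 0 1 :=
    fun ω => ⟨sigmoid_pos _, sigmoid_lt_one _⟩
  refine ⟨hmem, ?_⟩
  have := Measure.isProbabilityMeasure_map (μ := P) hXm.aemeasurable
  have := isProbabilityMeasure_binaryConcreteMeasure hα hl
  refine Measure.ext_of_Iic_of_ae_mem_Ioo (ν := binaryConcreteMeasure α l)
    ((ae_map_iff hXm.aemeasurable measurableSet_Ioo).2 (ae_of_all _ hmem))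
    ae_mem_Ioo_binaryConcreteMeasure fun t ht => ?_
  rw [Measure.map_apply hXm measurableSet_Iic, binaryConcreteMeasure_Iic hα hl ht]
  exact measure_sigmoid_le_eq_binaryConcreteCDF P hα hl hLogistic' ht
end

section
/- (Binary log-convexity) If 0 < λ ≤ 1, then the Binary Concrete density p_{α,λ}(x) = λ α x^{-λ-1}(1-x)^{-λ-1}/(α x^{-λ} + (1-x)^{-λ})² is log-convex in x on (0,1), for every α > 0. -/
/-!
Multiplying numerator and denominator by `x ^ (2λ) * (1 - x) ^ (2λ)` gives
`log p(x) = log (λα) - (1 - λ) (log x + log (1 - x)) - 2 log (α (1 - x) ^ λ + x ^ λ)`.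
For `λ ≤ 1` the middle term is a nonnegative multiple of a concave function, and
`α (1 - x) ^ λ + x ^ λ` is positive and concave because `t ↦ t ^ λ` is, so its logarithm is
concave as well.
-/

open Real Set

theorem ConcaveOn.comp_one_sub {s : Set ℝ} {f : ℝ → ℝ} (hf : ConcaveOn ℝ s f) :
    ConcaveOn ℝ ((1 - ·) ⁻¹' s) fun x => f (1 - x) := by
  have hline : ⇑(AffineMap.lineMap (1 : ℝ) (0 : ℝ) : ℝ →ᵃ[ℝ] ℝ) = (1 - ·) := by
    ext x; simp [AffineMap.lineMap_apply_ring']; ring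
  have h := hf.comp_affineMap (AffineMap.lineMap (1 : ℝ) (0 : ℝ))
  rw [hline] at h
  exact h

theorem ConcaveOn.log {E : Type*} [AddCommGroup E] [Module ℝ E] {s : Set E} {f : E → ℝ}
    (hf : ConcaveOn ℝ s f) (hpos : ∀ x ∈ s, 0 < f x) : ConcaveOn ℝ s fun x => Real.log (f x) := by
  refine ⟨hf.1, fun x hx y hy a b ha hb hab => ?_⟩
  have hcomb : 0 < a • f x + b • f y := convex_Ioi (0 : ℝ) (hpos x hx) (hpos y hy) ha hb hab
  calc a • Real.log (f x) + b • Real.log (f y) ≤ Real.log (a • f x + b • f y) :=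
        strictConcaveOn_log_Ioi.concaveOn.2 (hpos x hx) (hpos y hy) ha hb hab
    _ ≤ Real.log (f (a • x + b • y)) := log_le_log hcomb (hf.2 hx hy ha hb hab)

noncomputable def binaryConcreteDensity (α l x : ℝ) : ℝ :=
  l * α * x ^ (-l - 1) * (1 - x) ^ (-l - 1) / (α * x ^ (-l) + (1 - x) ^ (-l)) ^ 2

theorem binaryConcreteDensity_eq (α l : ℝ) {x : ℝ} (hx : x ∈ Ioo (0 : ℝ) 1) :
    binaryConcreteDensity α l x =
      l * α * (x * (1 - x)) ^ (l - 1) / (α * (1 - x) ^ l + x ^ l) ^ 2 := by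
  have hx0 : 0 < x := hx.1
  have hx1 : 0 < 1 - x := sub_pos.2 hx.2
  have hu : 0 < x ^ l := rpow_pos_of_pos hx0 l
  have hv : 0 < (1 - x) ^ l := rpow_pos_of_pos hx1 l
  rw [binaryConcreteDensity, mul_rpow hx0.le hx1.le, sub_eq_add_neg (-l), sub_eq_add_neg l,
    rpow_add hx0, rpow_add hx1, rpow_add hx0, rpow_add hx1, rpow_neg hx0.le, rpow_neg hx1.le,
    rpow_neg_one, rpow_neg_one]
  field_simp

theorem log_binaryConcreteDensity {α l x : ℝ} (hα : 0 < α) (hl : 0 < l) (hx : x ∈ Ioo (0 : ℝ) 1) :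
    log (binaryConcreteDensity α l x) =
      log (l * α) - ((1 - l) * (log x + log (1 - x)) + 2 * log (α * (1 - x) ^ l + x ^ l)) := by
  have hx0 : 0 < x := hx.1
  have hx1 : 0 < 1 - x := sub_pos.2 hx.2
  have hinner : 0 < α * (1 - x) ^ l + x ^ l := by positivity
  rw [binaryConcreteDensity_eq α l hx, log_div (by positivity) (by positivity),
    log_mul (by positivity) (by positivity), log_rpow (by positivity), log_mul hx0.ne' hx1.ne',
    log_pow]
  push_cast
  ring

/-- Binary log-convexity: for `0 < λ ≤ 1` the Binary Concrete density is log-convex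
on `(0,1)`. -/
theorem binary_concrete_log_convex
    (α l : ℝ) (hα : 0 < α) (hl : 0 < l) (hl1 : l ≤ 1) :
    ConvexOn ℝ (Set.Ioo (0 : ℝ) 1)
      (fun x => Real.log
        (l * α * x ^ (-l - 1) * (1 - x) ^ (-l - 1) /
          (α * x ^ (-l) + (1 - x) ^ (-l)) ^ 2)) := by
  have hs : Convex ℝ (Ioo (0 : ℝ) 1) := convex_Ioo 0 1
  have hlog : ConcaveOn ℝ (Ioo (0 : ℝ) 1) fun x => log x + log (1 - x) :=
    ((concaveOn_id hs).log fun x hx => hx.1).add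
      (((concaveOn_const 1 hs).sub (convexOn_id hs)).log fun x hx => sub_pos.2 hx.2)
  have hpow : ConcaveOn ℝ (Ioo (0 : ℝ) 1) fun x => α * (1 - x) ^ l + x ^ l :=
    (((concaveOn_rpow hl.le hl1).comp_one_sub.subset (fun x hx => sub_nonneg.2 hx.2.le) hs).smul
      hα.le).add ((concaveOn_rpow hl.le hl1).subset (fun x hx => hx.1.le) hs)
  have hlogpow : ConcaveOn ℝ (Ioo (0 : ℝ) 1) fun x => log (α * (1 - x) ^ l + x ^ l) :=
    hpow.log fun x hx => by have := hx.1; have := sub_pos.2 hx.2; positivity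
  exact ((convexOn_const (log (l * α)) hs).sub
    ((hlog.smul (sub_nonneg.2 hl1)).add (hlogpow.smul zero_le_two))).congr
    fun x hx => (log_binaryConcreteDensity hα hl hx).symm
end
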